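/- Fix n ≥ 2 and nonzero real numbers x_1 < x_2 < … < x_{2n−3}. Then for every signal x ∈ ℂⁿ, the matrix xx* is the unique positive semidefinite Hermitian n×n matrix Y satisfying ⟨e_i, Y e_i⟩ = |⟨e_i, x⟩|² for all i ∈ {0,…,n−1}, ⟨v_k, Y v_k⟩ = |⟨v_k, x⟩|² and ⟨v̄_k, Y v̄_k⟩ = |⟨v̄_k, x⟩|² for all k ∈ {1,…,2n−3}. In particular, x can be recovered up to a global phase from these 5n−6 intensity measurements, and xx* is the unique minimizer of tr(Y) over this (one-point) feasible set. -/

import Mathlib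

/-!
Put `Δ = Y - x x*`: it is Hermitian with zero diagonal, and `Y ⪰ 0` makes its quadratic form
nonnegative on `x⊥`. With `ω = e^{iπ/(2n)}`, the measurement along `v_k` says
`v_k* Δ v_k = ∑_{a,b} Δ_ab ω^(b-a) x_k^(a+b) = 0`, a polynomial in `x_k` without constant term
and of degree `≤ 2n-4` (the extreme antidiagonals consist of diagonal entries). Vanishing at
`2n-3` distinct nonzero points kills it, so every twisted antidiagonal sum
`∑_{a+b=m} Δ_ab ω^(b-a)` vanishes, and likewise with `ω̄` from the conjugate vectors.

Now induct on the antidiagonal `m`, all earlier ones being zero. If two entries `Δ_jl`, `Δ_pq`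
with `j < p < q < l` on it were nonzero, then on the plane spanned by
`r^j e_j - r^l conj(Δ_jl) e_l` and `r^p e_p - r^q conj(Δ_pq) e_q` the form would be
`-2 r^m diag(|Δ_jl|², |Δ_pq|²) + O(r^(m+1))`, negative definite for small `r`; but a plane
meets `x⊥`. So at most one entry `z = Δ_jl`, `j < l`, survives, and the two sums read
`Re(z ω^d) = Re(z ω̄^d) = 0` with `d = l - j ∈ (0, n)`. As `ω^d` lies in the open first
quadrant, `z = 0`.
-/

open Matrix
open scoped ComplexOrder

noncomputable section

/-- The vector `v = (1, x e^{iπ/(2n)}, x² e^{2iπ/(2n)}, …, x^{n−1} e^{(n−1)iπ/(2n)})ᵗ ∈ ℂⁿ`. -/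
noncomputable def pvec (n : ℕ) (x : ℝ) : Fin n → ℂ := fun j =>
  (x : ℂ) ^ (j : ℕ) *
    Complex.exp (((j : ℕ) : ℂ) * (Real.pi : ℂ) * Complex.I / (2 * (n : ℂ)))

open Polynomial ComplexConjugate

theorem Polynomial.eq_zero_of_coeff_zero_of_natDegree_le_card {R : Type*} [CommRing R]
    [IsDomain R] {ι : Type*} [Fintype ι] (p : R[X]) {f : ι → R} (hf : Function.Injective f)
    (hf0 : ∀ i, f i ≠ 0) (heval : ∀ i, p.eval (f i) = 0) (hcoeff : p.coeff 0 = 0)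
    (hdeg : p.natDegree ≤ Fintype.card ι) : p = 0 := by
  refine p.eq_zero_of_natDegree_lt_card_of_eval_eq_zero (f := fun i : Option ι => i.elim 0 f)
    ?_ ?_ (by simpa using Nat.lt_succ_of_le hdeg)
  · rintro (_ | i) (_ | k) h
    · rfl
    · exact absurd h.symm (hf0 k)
    · exact absurd h (hf0 i)
    · exact congrArg some (hf h)
  · rintro (_ | i)
    · simpa [coeff_zero_eq_eval_zero] using hcoeff
    · exact heval i

theorem Complex.eq_zero_of_re_mul_eq_zero_of_re_mul_conj_eq_zero {z u : ℂ} (hre : 0 < u.re)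
    (him : 0 < u.im) (h₁ : (z * u).re = 0) (h₂ : (z * conj u).re = 0) : z = 0 := by
  simp only [Complex.mul_re, Complex.conj_re, Complex.conj_im] at h₁ h₂
  have hzre : z.re * u.re = 0 := by linarith
  have hzim : z.im * u.im = 0 := by linarith
  exact Complex.ext (by simpa [hre.ne'] using hzre) (by simpa [him.ne'] using hzim)

theorem sq_mul_add_sq_mul_add_two_mul_mul_neg {a b α β g : ℝ} (hα : α < 0) (hβ : β < 0)
    (hg : g ^ 2 < α * β) (hab : a ≠ 0 ∨ b ≠ 0) :
    a ^ 2 * α + b ^ 2 * β + 2 * (a * b * g) < 0 := by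
  -- with `E` the left side, `β E = (b β + a g)² + a² (α β - g²)`
  -- and `α E = (a α + b g)² + b² (α β - g²)`
  rcases hab with ha | hb
  · refine neg_of_mul_pos_right (a := β) ?_ hβ.le
    have := mul_pos (sq_pos_of_ne_zero ha) (sub_pos.2 hg)
    nlinarith [sq_nonneg (b * β + a * g)]
  · refine neg_of_mul_pos_right (a := α) ?_ hα.le
    have := mul_pos (sq_pos_of_ne_zero hb) (sub_pos.2 hg)
    nlinarith [sq_nonneg (a * α + b * g)]

section Form

variable {ι : Type*} [Fintype ι]

theorem Matrix.IsHermitian.star_dotProduct_mulVec_comm {M : Matrix ι ι ℂ}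
    (hM : M.IsHermitian) (u v : ι → ℂ) : star v ⬝ᵥ M *ᵥ u = star (star u ⬝ᵥ M *ᵥ v) := by
  rw [star_dotProduct, star_mulVec, hM.eq, dotProduct_mulVec]

theorem exists_smul_add_smul_orthogonal (x u v : ι → ℂ) :
    ∃ c₁ c₂ : ℂ, (c₁ ≠ 0 ∨ c₂ ≠ 0) ∧ star (c₁ • u + c₂ • v) ⬝ᵥ x = 0 := by
  by_cases hu : star u ⬝ᵥ x = 0
  · exact ⟨1, 0, Or.inl one_ne_zero, by simp [hu]⟩
  · refine ⟨star (star v ⬝ᵥ x), -star (star u ⬝ᵥ x), Or.inr (by simpa using hu), ?_⟩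
    simp only [star_add, star_smul, star_neg, star_star, add_dotProduct, smul_dotProduct,
      smul_eq_mul]
    ring

theorem Matrix.IsHermitian.re_star_smul_add_smul_dotProduct_mulVec {M : Matrix ι ι ℂ}
    (hM : M.IsHermitian) (u v : ι → ℂ) (c₁ c₂ : ℂ) :
    (star (c₁ • u + c₂ • v) ⬝ᵥ M *ᵥ (c₁ • u + c₂ • v)).re =
      ‖c₁‖ ^ 2 * (star u ⬝ᵥ M *ᵥ u).re + ‖c₂‖ ^ 2 * (star v ⬝ᵥ M *ᵥ v).re +
        2 * (star c₁ * c₂ * (star u ⬝ᵥ M *ᵥ v)).re := by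
  have hexp : star (c₁ • u + c₂ • v) ⬝ᵥ M *ᵥ (c₁ • u + c₂ • v) =
      (star c₁ * c₁) * (star u ⬝ᵥ M *ᵥ u) + (star c₂ * c₂) * (star v ⬝ᵥ M *ᵥ v) +
        (star c₁ * c₂ * (star u ⬝ᵥ M *ᵥ v) + star (star c₁ * c₂ * (star u ⬝ᵥ M *ᵥ v))) := by
    simp only [star_add, star_smul, mulVec_add, mulVec_smul, add_dotProduct, dotProduct_add,
      smul_dotProduct, dotProduct_smul, smul_eq_mul, star_mul', star_star,
      hM.star_dotProduct_mulVec_comm v u]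
    ring
  simp only [hexp, Complex.star_def, Complex.conj_mul', Complex.add_conj, Complex.add_re,
    ← Complex.ofReal_pow, Complex.re_ofReal_mul, Complex.ofReal_re]

theorem Matrix.IsHermitian.re_mul_re_le_sq_norm_of_nonneg_of_orthogonal {M : Matrix ι ι ℂ}
    (hM : M.IsHermitian) {x : ι → ℂ}
    (hpos : ∀ w, star w ⬝ᵥ x = 0 → 0 ≤ (star w ⬝ᵥ M *ᵥ w).re) {u v : ι → ℂ}
    (hu : (star u ⬝ᵥ M *ᵥ u).re < 0) (hv : (star v ⬝ᵥ M *ᵥ v).re < 0) :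
    (star u ⬝ᵥ M *ᵥ u).re * (star v ⬝ᵥ M *ᵥ v).re ≤ ‖star u ⬝ᵥ M *ᵥ v‖ ^ 2 := by
  by_contra! hγ
  obtain ⟨c₁, c₂, hc, hw⟩ := exists_smul_add_smul_orthogonal x u v
  have h0 := hpos _ hw
  rw [hM.re_star_smul_add_smul_dotProduct_mulVec] at h0
  have hcross :
      (star c₁ * c₂ * (star u ⬝ᵥ M *ᵥ v)).re ≤ ‖c₁‖ * ‖c₂‖ * ‖star u ⬝ᵥ M *ᵥ v‖ :=
    (Complex.re_le_norm _).trans (by simp)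
  have := sq_mul_add_sq_mul_add_two_mul_mul_neg hu hv hγ
    (hc.imp norm_ne_zero_iff.2 norm_ne_zero_iff.2)
  linarith

theorem star_dotProduct_sub_vecMulVec_mulVec (Y : Matrix ι ι ℂ) (x v : ι → ℂ) :
    star v ⬝ᵥ (Y - vecMulVec x (star x)) *ᵥ v =
      star v ⬝ᵥ Y *ᵥ v - Complex.normSq (star v ⬝ᵥ x) := by
  rw [sub_mulVec, dotProduct_sub, vecMulVec_mulVec, star_dotProduct x, ← Complex.mul_conj]
  simp [dotProduct_comm, mul_comm]

theorem star_single_add_single_dotProduct_mulVec {R : Type*} [DecidableEq ι]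
    [CommRing R] [StarRing R] (M : Matrix ι ι R) (i k p q : ι) (a b c d : R) :
    star (Pi.single i a + Pi.single k b) ⬝ᵥ M *ᵥ (Pi.single p c + Pi.single q d) =
      star a * M i p * c + star a * M i q * d + star b * M k p * c + star b * M k q * d := by
  simp only [star_add, ← Pi.single_star, mulVec_add, mulVec_single, dotProduct_add,
    add_dotProduct, single_dotProduct, Pi.smul_apply, op_smul_eq_mul, col_apply]
  ring

end Form

namespace PhaseRetrieval

variable {n : ℕ}

def hankelPoly {R : Type*} [Semiring R] (A : Matrix (Fin n) (Fin n) R) : R[X] :=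
  ∑ j, ∑ l, C (A j l) * X ^ ((j : ℕ) + l)

theorem coeff_hankelPoly {R : Type*} [Semiring R] (A : Matrix (Fin n) (Fin n) R) (m : ℕ) :
    (hankelPoly A).coeff m =
      ∑ j : Fin n, ∑ l : Fin n, if (j : ℕ) + l = m then A j l else 0 := by
  simp only [hankelPoly, finsetSum_coeff, coeff_C_mul_X_pow, eq_comm]

theorem eval_hankelPoly {R : Type*} [CommSemiring R] (A : Matrix (Fin n) (Fin n) R) (s : R) :
    (hankelPoly A).eval s = ∑ j, ∑ l, A j l * s ^ ((j : ℕ) + l) := by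
  simp [hankelPoly, eval_finsetSum]

theorem coeff_hankelPoly_eq_add {R : Type*} [Semiring R] (A : Matrix (Fin n) (Fin n) R)
    {j l : Fin n} (hjl : j ≠ l) {m : ℕ} (hm : (j : ℕ) + l = m)
    (h : ∀ a b : Fin n, (a : ℕ) + b = m → a ≠ j → a ≠ l → A a b = 0) :
    (hankelPoly A).coeff m = A j l + A l j := by
  rw [coeff_hankelPoly, ← Fintype.sum_prod_type', Finset.sum_eq_add (j, l) (l, j)]
  · simp [hm, show (l : ℕ) + j = m by omega]
  · simp [hjl]
  · rintro ⟨a, b⟩ - hab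
    split_ifs with habm
    · refine h a b habm ?_ ?_ <;> rintro rfl
      · exact hab.1 (Prod.ext rfl (Fin.ext (by dsimp only at habm ⊢; omega)))
      · exact hab.2 (Prod.ext rfl (Fin.ext (by dsimp only at habm ⊢; omega)))
    · rfl
  all_goals simp

theorem hankelPoly_eq_zero {K : Type*} [CommRing K] [IsDomain K]
    {A : Matrix (Fin n) (Fin n) K} (hA : ∀ i, A i i = 0) {ι : Type*} [Fintype ι]
    (hι : 2 * n - 3 ≤ Fintype.card ι) {f : ι → K} (hf : Function.Injective f)
    (hf0 : ∀ i, f i ≠ 0) (heval : ∀ i, (hankelPoly A).eval (f i) = 0) : hankelPoly A = 0 := by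
  have hcoeff : ∀ m, m = 0 ∨ 2 * n - 3 < m → (hankelPoly A).coeff m = 0 := by
    intro m hm
    rw [coeff_hankelPoly]
    refine Finset.sum_eq_zero fun j _ => Finset.sum_eq_zero fun l _ => ?_
    split_ifs with h
    · obtain rfl : j = l := Fin.ext (by omega)
      exact hA j
    · rfl
  refine (hankelPoly A).eq_zero_of_coeff_zero_of_natDegree_le_card hf hf0 heval
    (hcoeff 0 (Or.inl rfl)) (le_trans ?_ hι)
  exact natDegree_le_iff_coeff_eq_zero.2 fun m hm => hcoeff m (Or.inr (by exact_mod_cast hm))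

theorem star_dotProduct_mulVec_eq_eval_hankelPoly (M : Matrix (Fin n) (Fin n) ℂ)
    (c : Fin n → ℂ) (s : ℝ) :
    star (fun j : Fin n => (s : ℂ) ^ (j : ℕ) * c j) ⬝ᵥ
        M *ᵥ (fun j : Fin n => (s : ℂ) ^ (j : ℕ) * c j) =
      (hankelPoly (diagonal (star c) * M * diagonal c)).eval (s : ℂ) := by
  simp only [eval_hankelPoly, dotProduct, mulVec, Finset.mul_sum, mul_diagonal, diagonal_mul]
  refine Finset.sum_congr rfl fun j _ => Finset.sum_congr rfl fun l _ => ?_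
  simp only [Pi.star_apply, star_mul', star_pow, Complex.star_def, Complex.conj_ofReal]
  ring

theorem hankelPoly_eq_zero_of_star_dotProduct_mulVec_eq_zero {Δ : Matrix (Fin n) (Fin n) ℂ}
    (hdiag : ∀ i, Δ i i = 0) {ι : Type*} [Fintype ι] (hι : 2 * n - 3 ≤ Fintype.card ι)
    {t : ι → ℝ} (ht : Function.Injective t) (ht0 : ∀ k, t k ≠ 0) (c : Fin n → ℂ)
    (h : ∀ k, star (fun j : Fin n => (t k : ℂ) ^ (j : ℕ) * c j) ⬝ᵥ
      Δ *ᵥ (fun j : Fin n => (t k : ℂ) ^ (j : ℕ) * c j) = 0) :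
    hankelPoly (diagonal (star c) * Δ * diagonal c) = 0 :=
  hankelPoly_eq_zero (fun i => by simp [hdiag i]) hι (Complex.ofReal_injective.comp ht)
    (fun k => Complex.ofReal_ne_zero.2 (ht0 k))
    fun k => by
      rw [Function.comp_apply, ← star_dotProduct_mulVec_eq_eval_hankelPoly]; exact h k

theorem re_mul_eq_zero_of_coeff_hankelPoly_eq_zero {Δ : Matrix (Fin n) (Fin n) ℂ}
    (hΔ : Δ.IsHermitian) (c : Fin n → ℂ) {j l : Fin n} (hjl : j ≠ l) {m : ℕ}
    (hm : (j : ℕ) + l = m)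
    (hrest : ∀ a b : Fin n, (a : ℕ) + b = m → a ≠ j → a ≠ l → Δ a b = 0)
    (h : (hankelPoly (diagonal (star c) * Δ * diagonal c)).coeff m = 0) :
    (Δ j l * (star (c j) * c l)).re = 0 := by
  rw [coeff_hankelPoly_eq_add _ hjl hm fun a b hab haj hal => by simp [hrest a b hab haj hal]]
    at h
  have h' : Δ j l * (star (c j) * c l) + conj (Δ j l * (star (c j) * c l)) = 0 := by
    rw [← h]
    simp only [mul_diagonal, diagonal_mul, Pi.star_apply, ← hΔ.apply l j, map_mul,
      Complex.star_def, Complex.conj_conj]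
    ring
  rw [Complex.add_conj, Complex.ofReal_eq_zero] at h'
  linarith

def probeVec (Δ : Matrix (Fin n) (Fin n) ℂ) (r : ℝ) (i k : Fin n) : Fin n → ℂ :=
  Pi.single i ((r : ℂ) ^ (i : ℕ)) + Pi.single k (-(r : ℂ) ^ (k : ℕ) * star (Δ i k))

theorem star_probeVec_dotProduct_mulVec_self {Δ : Matrix (Fin n) (Fin n) ℂ}
    (hΔ : Δ.IsHermitian) (hdiag : ∀ i, Δ i i = 0) (r : ℝ) (i k : Fin n) :
    star (probeVec Δ r i k) ⬝ᵥ Δ *ᵥ probeVec Δ r i k =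
      ((-(2 * r ^ ((i : ℕ) + k) * ‖Δ i k‖ ^ 2) : ℝ) : ℂ) := by
  rw [probeVec, star_single_add_single_dotProduct_mulVec, hdiag, hdiag, ← hΔ.apply k i]
  simp only [star_mul', star_neg, star_pow, Complex.star_def, Complex.conj_conj,
    Complex.conj_ofReal]
  push_cast
  rw [← Complex.mul_conj', pow_add]
  ring

theorem norm_star_probeVec_dotProduct_mulVec_probeVec_le {Δ : Matrix (Fin n) (Fin n) ℂ}
    {m : ℕ} (hmin : ∀ a b : Fin n, (a : ℕ) + b < m → Δ a b = 0) {r : ℝ} (hr : 0 ≤ r)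
    (hr1 : r ≤ 1) {j p q l : Fin n} (hjp : j < p) (hpq : p < q) (hjl : (j : ℕ) + l = m)
    (hpqm : (p : ℕ) + q = m) :
    ‖star (probeVec Δ r j l) ⬝ᵥ Δ *ᵥ probeVec Δ r p q‖ ≤
      r ^ (m + 1) * (‖Δ j l‖ * ‖Δ l p‖ + ‖Δ j l‖ * ‖Δ l q‖ * ‖Δ p q‖) := by
  rw [probeVec, probeVec, star_single_add_single_dotProduct_mulVec, hmin j p (by omega),
    hmin j q (by omega)]
  have hlp : r ^ ((l : ℕ) + p) ≤ r ^ (m + 1) := pow_le_pow_of_le_one hr hr1 (by omega)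
  have hlq : r ^ ((l : ℕ) + q) ≤ r ^ (m + 1) := pow_le_pow_of_le_one hr hr1 (by omega)
  calc _ = ‖((r ^ ((l : ℕ) + q) : ℝ) : ℂ) * (Δ j l * Δ l q * star (Δ p q)) -
        ((r ^ ((l : ℕ) + p) : ℝ) : ℂ) * (Δ j l * Δ l p)‖ := by
        congr 1
        simp only [star_mul', star_neg, star_pow, Complex.star_def, Complex.conj_conj,
          Complex.conj_ofReal]
        push_cast
        ring
    _ ≤ r ^ ((l : ℕ) + q) * (‖Δ j l‖ * ‖Δ l q‖ * ‖Δ p q‖) +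
        r ^ ((l : ℕ) + p) * (‖Δ j l‖ * ‖Δ l p‖) := by
        refine (norm_sub_le _ _).trans_eq ?_
        simp [abs_of_nonneg hr]
    _ ≤ _ := by
        rw [mul_add, add_comm]
        gcongr

theorem antidiagonal_entry_eq_zero_or {Δ : Matrix (Fin n) (Fin n) ℂ} (hΔ : Δ.IsHermitian)
    (hdiag : ∀ i, Δ i i = 0) {x : Fin n → ℂ}
    (hpos : ∀ w, star w ⬝ᵥ x = 0 → 0 ≤ (star w ⬝ᵥ Δ *ᵥ w).re) {m : ℕ}
    (hmin : ∀ a b : Fin n, (a : ℕ) + b < m → Δ a b = 0) {j p q l : Fin n} (hjp : j < p)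
    (hpq : p < q) (hjl : (j : ℕ) + l = m) (hpqm : (p : ℕ) + q = m) :
    Δ j l = 0 ∨ Δ p q = 0 := by
  by_contra! h
  set C := ‖Δ j l‖ * ‖Δ l p‖ + ‖Δ j l‖ * ‖Δ l q‖ * ‖Δ p q‖
  have hδ : 0 < ‖Δ j l‖ * ‖Δ p q‖ := mul_pos (norm_pos_iff.2 h.1) (norm_pos_iff.2 h.2)
  obtain ⟨r₀, hr₀, hr₀C⟩ := exists_pos_mul_lt hδ C
  set r := min r₀ 1
  have hr : 0 < r := lt_min hr₀ one_pos
  have hrC : C * r < ‖Δ j l‖ * ‖Δ p q‖ :=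
    (mul_le_mul_of_nonneg_left (min_le_left _ _) (by positivity)).trans_lt hr₀C
  have hform (i k : Fin n) : (star (probeVec Δ r i k) ⬝ᵥ Δ *ᵥ probeVec Δ r i k).re =
      -(2 * r ^ ((i : ℕ) + k) * ‖Δ i k‖ ^ 2) := by
    rw [star_probeVec_dotProduct_mulVec_self hΔ hdiag, Complex.ofReal_re]
  have hneg (i k : Fin n) (hik : Δ i k ≠ 0) :
      (star (probeVec Δ r i k) ⬝ᵥ Δ *ᵥ probeVec Δ r i k).re < 0 := by
    have := norm_pos_iff.2 hik
    rw [hform]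
    simp only [neg_lt_zero]
    positivity
  have key :=
    hΔ.re_mul_re_le_sq_norm_of_nonneg_of_orthogonal hpos (hneg j l h.1) (hneg p q h.2)
  have hγ := (norm_star_probeVec_dotProduct_mulVec_probeVec_le hmin hr.le (min_le_right _ _)
    hjp hpq hjl hpqm).trans_eq (by rw [pow_succ]; ring : r ^ (m + 1) * C = r ^ m * (C * r))
  rw [hform, hform, hjl, hpqm] at key
  have hrm : 0 < r ^ m := pow_pos hr m
  have := pow_le_pow_left₀ (norm_nonneg _) hγ 2
  nlinarith [mul_pos hrm hrm, mul_self_lt_mul_self (by positivity : 0 ≤ C * r) hrC]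

theorem antidiagonal_eq_zero_of_hankelPoly_eq_zero {Δ : Matrix (Fin n) (Fin n) ℂ}
    (hΔ : Δ.IsHermitian) (hdiag : ∀ i, Δ i i = 0) {x : Fin n → ℂ}
    (hpos : ∀ w, star w ⬝ᵥ x = 0 → 0 ≤ (star w ⬝ᵥ Δ *ᵥ w).re) {c : Fin n → ℂ}
    (hc : ∀ j l : Fin n, j < l → 0 < (star (c j) * c l).re ∧ 0 < (star (c j) * c l).im)
    (h₁ : hankelPoly (diagonal (star c) * Δ * diagonal c) = 0)
    (h₂ : hankelPoly (diagonal c * Δ * diagonal (star c)) = 0) {m : ℕ}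
    (hmin : ∀ a b : Fin n, (a : ℕ) + b < m → Δ a b = 0) (a b : Fin n) (hab : (a : ℕ) + b = m) :
    Δ a b = 0 := by
  have hupper : ∀ j l : Fin n, j < l → (j : ℕ) + l = m → Δ j l = 0 := by
    intro j l hjl hm
    by_contra hz
    have huniq : ∀ p q : Fin n, p < q → (p : ℕ) + q = m → p ≠ j → Δ p q = 0 := by
      intro p q hpq hpqm hpj
      rcases lt_or_gt_of_ne hpj with h | h
      · exact (antidiagonal_entry_eq_zero_or hΔ hdiag hpos hmin h hjl hpqm hm).resolve_right hz
      · exact (antidiagonal_entry_eq_zero_or hΔ hdiag hpos hmin h hpq hm hpqm).resolve_left hz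
    have hrest : ∀ a b : Fin n, (a : ℕ) + b = m → a ≠ j → a ≠ l → Δ a b = 0 := by
      intro a b hab haj hal
      rcases lt_trichotomy a b with h | rfl | h
      · exact huniq a b h hab haj
      · exact hdiag a
      · rw [← hΔ.apply a b, huniq b a h (by omega) fun hbj => hal (Fin.ext (by omega)),
          star_zero]
    have e₁ := re_mul_eq_zero_of_coeff_hankelPoly_eq_zero hΔ c hjl.ne hm hrest
      (by rw [h₁, coeff_zero])
    have e₂ := re_mul_eq_zero_of_coeff_hankelPoly_eq_zero hΔ (star c) hjl.ne hm hrest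
      (by rw [star_star, h₂, coeff_zero])
    refine hz (Complex.eq_zero_of_re_mul_eq_zero_of_re_mul_conj_eq_zero (hc j l hjl).1
      (hc j l hjl).2 e₁ ?_)
    simpa [Complex.star_def] using e₂
  rcases lt_trichotomy a b with h | rfl | h
  · exact hupper a b h hab
  · exact hdiag a
  · rw [← hΔ.apply a b, hupper b a h (by omega), star_zero]

theorem eq_zero_of_hankelPoly_eq_zero {Δ : Matrix (Fin n) (Fin n) ℂ} (hΔ : Δ.IsHermitian)
    (hdiag : ∀ i, Δ i i = 0) {x : Fin n → ℂ}
    (hpos : ∀ w, star w ⬝ᵥ x = 0 → 0 ≤ (star w ⬝ᵥ Δ *ᵥ w).re) {c : Fin n → ℂ}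
    (hc : ∀ j l : Fin n, j < l → 0 < (star (c j) * c l).re ∧ 0 < (star (c j) * c l).im)
    (h₁ : hankelPoly (diagonal (star c) * Δ * diagonal c) = 0)
    (h₂ : hankelPoly (diagonal c * Δ * diagonal (star c)) = 0) : Δ = 0 := by
  suffices h : ∀ m, ∀ a b : Fin n, (a : ℕ) + b = m → Δ a b = 0 from
    Matrix.ext fun a b => h _ a b rfl
  intro m
  induction m using Nat.strong_induction_on with
  | _ m ih =>
    exact antidiagonal_eq_zero_of_hankelPoly_eq_zero hΔ hdiag hpos hc h₁ h₂
      fun a b hab => ih _ hab a b rfl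

def phase (n : ℕ) : ℂ := Complex.exp (Real.pi * Complex.I / (2 * n))

theorem pvec_eq (n : ℕ) (s : ℝ) :
    pvec n s = fun j : Fin n => (s : ℂ) ^ (j : ℕ) * phase n ^ (j : ℕ) := by
  ext j
  rw [pvec, phase, ← Complex.exp_nat_mul, mul_assoc, mul_div_assoc]

theorem star_pvec (n : ℕ) (s : ℝ) :
    star (pvec n s) = fun j : Fin n => (s : ℂ) ^ (j : ℕ) * star (phase n ^ (j : ℕ)) := by
  ext j
  simp [pvec_eq, Complex.conj_ofReal]

theorem re_pos_and_im_pos_star_phase_pow_mul_phase_pow {n j l : ℕ} (hjl : j < l) (hln : l < n) :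
    0 < (star (phase n ^ j) * phase n ^ l).re ∧ 0 < (star (phase n ^ j) * phase n ^ l).im := by
  set θ : ℝ := (l - j : ℕ) * (Real.pi / (2 * n))
  have hθ : star (phase n ^ j) * phase n ^ l = Complex.exp (θ * Complex.I) := by
    rw [phase, ← Complex.exp_nat_mul, ← Complex.exp_nat_mul, Complex.star_def,
      ← Complex.exp_conj, ← Complex.exp_add]
    congr 1
    simp only [θ, map_div₀, map_mul, Complex.conj_ofReal, Complex.conj_I, map_ofNat,
      map_natCast]
    push_cast [Nat.cast_sub hjl.le]
    ring
  have hn : (0 : ℝ) < n := by exact_mod_cast (hjl.trans hln).trans_le' (Nat.zero_le _)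
  have hθ0 : 0 < θ := by
    have : (0 : ℝ) < (l - j : ℕ) := by exact_mod_cast Nat.sub_pos_of_lt hjl
    positivity
  have hθ1 : θ < Real.pi / 2 := by
    have : ((l - j : ℕ) : ℝ) < n := by exact_mod_cast (Nat.sub_le l j).trans_lt hln
    calc θ < n * (Real.pi / (2 * n)) := mul_lt_mul_of_pos_right this (by positivity)
      _ = Real.pi / 2 := by field_simp
  rw [hθ, Complex.exp_ofReal_mul_I_re, Complex.exp_ofReal_mul_I_im]
  exact ⟨Real.cos_pos_of_mem_Ioo ⟨by linarith, hθ1⟩,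
    Real.sin_pos_of_pos_of_lt_pi hθ0 (by linarith [Real.pi_pos])⟩

end PhaseRetrieval

open PhaseRetrieval

theorem stmt3_general {n : ℕ} (t : Fin (2 * n - 3) → ℝ)
    (ht0 : ∀ k, t k ≠ 0) (htmono : StrictMono t) (x : Fin n → ℂ) :
    ∀ Y : Matrix (Fin n) (Fin n) ℂ, Y.PosSemidef →
      (∀ i : Fin n, Y i i = (Complex.normSq (x i) : ℂ)) →
      (∀ k, star (pvec n (t k)) ⬝ᵥ Y.mulVec (pvec n (t k)) =
        (Complex.normSq (star (pvec n (t k)) ⬝ᵥ x) : ℂ)) →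
      (∀ k, star (star (pvec n (t k))) ⬝ᵥ Y.mulVec (star (pvec n (t k))) =
        (Complex.normSq (star (star (pvec n (t k))) ⬝ᵥ x) : ℂ)) →
      Y = vecMulVec x (star x) := by
  intro Y hY hdiagY h₁ h₂
  set Δ := Y - vecMulVec x (star x)
  have hΔ : Δ.IsHermitian := hY.isHermitian.sub (posSemidef_vecMulVec_self_star x).isHermitian
  have hdiag : ∀ i, Δ i i = 0 := fun i => by
    simp [Δ, hdiagY i, vecMulVec_apply, Complex.mul_conj]
  have hpos : ∀ w, star w ⬝ᵥ x = 0 → 0 ≤ (star w ⬝ᵥ Δ *ᵥ w).re := fun w hw => by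
    simpa [Δ, star_dotProduct_sub_vecMulVec_mulVec, hw] using
      (Complex.nonneg_iff.1 (hY.dotProduct_mulVec_nonneg w)).1
  have hmeas (v : Fin n → ℂ) (hv : star v ⬝ᵥ Y *ᵥ v = Complex.normSq (star v ⬝ᵥ x)) :
      star v ⬝ᵥ Δ *ᵥ v = 0 := by
    rw [star_dotProduct_sub_vecMulVec_mulVec, hv, sub_self]
  have hcard : 2 * n - 3 ≤ Fintype.card (Fin (2 * n - 3)) := (Fintype.card_fin _).ge
  rw [← sub_eq_zero]
  refine eq_zero_of_hankelPoly_eq_zero hΔ hdiag hpos (c := fun j => phase n ^ (j : ℕ))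
    (fun j l hjl => re_pos_and_im_pos_star_phase_pow_mul_phase_pow hjl l.isLt) ?_ ?_
  · refine hankelPoly_eq_zero_of_star_dotProduct_mulVec_eq_zero hdiag hcard htmono.injective
      ht0 _ fun k => ?_
    simpa only [pvec_eq] using hmeas _ (h₁ k)
  · simpa using hankelPoly_eq_zero_of_star_dotProduct_mulVec_eq_zero hdiag hcard htmono.injective
      ht0 (star _) fun k => by
        have := hmeas _ (h₂ k)
        rw [star_pvec] at this
        exact this

/-- for every signal `x ∈ ℂⁿ`, the matrix `xx*` is the unique PSD matrix `Y`
reproducing the intensities `⟨e_i, Y e_i⟩ = |⟨e_i, x⟩|²`, `⟨v_k, Y v_k⟩ = |⟨v_k, x⟩|²` and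
`⟨v̄_k, Y v̄_k⟩ = |⟨v̄_k, x⟩|²`; in particular `x` is recovered up to a global phase. -/
theorem stmt3 {n : ℕ} (hn : 2 ≤ n) (t : Fin (2 * n - 3) → ℝ)
    (ht0 : ∀ k, t k ≠ 0) (htmono : StrictMono t) (x : Fin n → ℂ) :
    ∀ Y : Matrix (Fin n) (Fin n) ℂ, Y.PosSemidef →
      (∀ i : Fin n, Y i i = (Complex.normSq (x i) : ℂ)) →
      (∀ k, star (pvec n (t k)) ⬝ᵥ Y.mulVec (pvec n (t k)) =
        (Complex.normSq (star (pvec n (t k)) ⬝ᵥ x) : ℂ)) →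
      (∀ k, star (star (pvec n (t k))) ⬝ᵥ Y.mulVec (star (pvec n (t k))) =
        (Complex.normSq (star (star (pvec n (t k))) ⬝ᵥ x) : ℂ)) →
      Y = vecMulVec x (star x) :=
  stmt3_general t ht0 htmono x
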